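/- Let A = (Q, Σ, δ) be a weakly acyclic automaton with n states and let S ⊆ Q be reachable, i.e., S = {δ(q, w) : q ∈ Q} for some word w ∈ Σ*. Then there exists a word w' of length at most n(n − 1)/2 with {δ(q, w') : q ∈ Q} = S. -/

import Mathlib

/-- The extension of the transition function to words. -/
def deltaStar {Q A : Type*} (δ : Q → A → Q) (q : Q) (w : List A) : Q := w.foldl δ q

/-- A simple cycle: pairwise distinct states `q 0, …, q (k-1)` together with letters
mapping each state of the cycle to the next one (cyclically). -/
def IsSimpleCycle {Q A : Type*} (δ : Q → A → Q) (k : ℕ) (q : Fin k → Q) : Prop :=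
  0 < k ∧ Function.Injective q ∧
    ∃ x : Fin k → A, ∀ i : Fin k, δ (q i) (x i) = q ⟨(i.val + 1) % k, Nat.mod_lt _ i.pos⟩

/-- An automaton is weakly acyclic if all its simple cycles are self-loops. -/
def WeaklyAcyclic {Q A : Type*} (δ : Q → A → Q) : Prop :=
  ∀ (k : ℕ) (q : Fin k → Q), IsSimpleCycle δ k q → k = 1

/-- A sink state is fixed by every letter. -/
def IsSink {Q A : Type*} (δ : Q → A → Q) (q : Q) : Prop := ∀ x : A, δ q x = q

/-- The word `w` synchronizes the set `S` of states. -/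
def SyncsSet {Q A : Type*} (δ : Q → A → Q) (S : Finset Q) (w : List A) : Prop :=
  ∃ q : Q, ∀ s ∈ S, deltaStar δ s w = q

/-- A set of states is synchronizing if some word synchronizes it. -/
def IsSyncSet {Q A : Type*} (δ : Q → A → Q) (S : Finset Q) : Prop :=
  ∃ w : List A, SyncsSet δ S w

/-- The rank of a word with respect to an automaton: the size of the image of the
state set under the word. -/
def wordRank {Q A : Type*} [Fintype Q] [DecidableEq Q] (δ : Q → A → Q) (w : List A) : ℕ :=
  (Finset.univ.image fun q => deltaStar δ q w).card

/-- The rank of an automaton: the minimum rank of a word with respect to it. -/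
noncomputable def autRank {Q A : Type*} [Fintype Q] [DecidableEq Q] (δ : Q → A → Q) : ℕ :=
  sInf {r | ∃ w : List A, wordRank δ w = r}

/-- The rank of a word with respect to a subset of states. -/
def subsetWordRank {Q A : Type*} [DecidableEq Q] (δ : Q → A → Q) (S : Finset Q)
    (w : List A) : ℕ :=
  (S.image fun q => deltaStar δ q w).card

/-- The rank of a subset of states: the minimum rank of a word with respect to it. -/
noncomputable def subsetRank {Q A : Type*} [DecidableEq Q] (δ : Q → A → Q) (S : Finset Q) : ℕ :=
  sInf {r | ∃ w : List A, subsetWordRank δ S w = r}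

/-- `w^j`: the word obtained by `j` concatenations of `w`. -/
def wordPow {A : Type*} (w : List A) (j : ℕ) : List A := (List.replicate j w).flatten

/-!
In a weakly acyclic automaton a closed walk can only run along self-loops, so reachability is a
partial order on the states. Numbering the states `0, …, n - 1` along a linear extension of it,
every transition that is not a self-loop increases the number. Given a word with image `S`, drop
each letter that fixes every state of the image of the preceding prefix: the image is still `S`,
and each remaining letter raises the sum of the numbers of the states `δ(q, ·)`, `q ∈ Q`, by at
least one. That total starts at `0 + 1 + ⋯ + (n - 1) = n(n - 1)/2` and never exceeds
`n(n - 1)`, so at most `n(n - 1)/2` letters remain.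
-/

section

variable {Q A : Type*} (δ : Q → A → Q)

@[simp]
lemma deltaStar_nil (q : Q) : deltaStar δ q [] = q := rfl

lemma deltaStar_append (q : Q) (u v : List A) :
    deltaStar δ q (u ++ v) = deltaStar δ (deltaStar δ q u) v :=
  List.foldl_append ..

lemma deltaStar_take_add_one (q : Q) (w : List A) (i : ℕ) (hi : i < w.length) :
    deltaStar δ q (w.take (i + 1)) = δ (deltaStar δ q (w.take i)) w[i] := by
  rw [List.take_add_one, List.getElem?_eq_getElem hi, deltaStar_append]
  rfl

def IsWalk (s : ℕ → Q) (m : ℕ) : Prop := ∀ i < m, ∃ x, δ (s i) x = s (i + 1)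

variable {δ}

lemma IsWalk.isSimpleCycle {s : ℕ → Q} {m : ℕ} (hs : IsWalk δ s m) (hm : 0 < m)
    (hclosed : s m = s 0) (hinj : Set.InjOn s (Set.Iio m)) :
    IsSimpleCycle δ m (fun i => s i) := by
  refine ⟨hm, fun i j hij => Fin.ext (hinj i.isLt j.isLt hij), ?_⟩
  have hstep (i : Fin m) : ∃ x, δ (s i) x = s ((i + 1) % m) := by
    obtain ⟨x, hx⟩ := hs i i.isLt
    refine ⟨x, hx.trans ?_⟩
    rcases Nat.lt_or_ge (i + 1) m with hlt | hge
    · rw [Nat.mod_eq_of_lt hlt]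
    · rw [show (i : ℕ) + 1 = m by omega, Nat.mod_self, hclosed]
  choose x hx using hstep
  exact ⟨x, hx⟩

lemma IsWalk.shift {s : ℕ → Q} {m : ℕ} (hs : IsWalk δ s m) {i k : ℕ} (hik : i + k ≤ m) :
    IsWalk δ (fun r => s (i + r)) k :=
  fun r hr => hs (i + r) (by omega)

lemma IsWalk.splice {s : ℕ → Q} {m : ℕ} (hs : IsWalk δ s m) {i j : ℕ} (hij : i ≤ j)
    (hjm : j ≤ m) (heq : s i = s j) :
    IsWalk δ (fun r => if r ≤ i then s r else s (r + (j - i))) (m - (j - i)) := by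
  intro r hr
  rcases lt_trichotomy r i with hlt | rfl | hgt
  · simpa [hlt.le, Nat.succ_le_of_lt hlt] using hs r (by omega)
  · obtain ⟨x, hx⟩ := hs j (by omega)
    refine ⟨x, ?_⟩
    simp only [le_refl, if_true, show ¬ r + 1 ≤ r by omega, if_false, heq, hx]
    congr 1
    omega
  · simp only [show ¬ r ≤ i by omega, show ¬ r + 1 ≤ i by omega, if_false,
      show r + 1 + (j - i) = r + (j - i) + 1 by omega]
    exact hs _ (by omega)

/-- A closed walk is either a simple cycle, hence a self-loop, or it revisits a state and splits
into two shorter closed walks. -/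
theorem WeaklyAcyclic.walk_eq_start_of_closed (hwa : WeaklyAcyclic δ) {s : ℕ → Q} {m : ℕ}
    (hs : IsWalk δ s m) (hclosed : s m = s 0) : ∀ a ≤ m, s a = s 0 := by
  induction m using Nat.strong_induction_on generalizing s with
  | _ m ih =>
  intro a ha
  by_cases hinj : Set.InjOn s (Set.Iio m)
  · rcases Nat.eq_zero_or_pos m with rfl | hm
    · rw [Nat.le_zero.mp ha]
    have hm1 : m = 1 := hwa m _ (hs.isSimpleCycle hm hclosed hinj)
    rcases Nat.le_one_iff_eq_zero_or_eq_one.mp (hm1 ▸ ha) with rfl | rfl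
    · rfl
    · rw [← hm1, hclosed]
  obtain ⟨i, j, hij, hjm, heq⟩ : ∃ i j, i < j ∧ j < m ∧ s i = s j := by
    simp only [Set.InjOn, Set.mem_Iio, not_forall] at hinj
    obtain ⟨i, hi, j, hj, heq, hne⟩ := hinj
    rcases Nat.lt_or_gt_of_ne hne with h | h
    · exact ⟨i, j, h, hj, heq⟩
    · exact ⟨j, i, h, hi, heq.symm⟩
  have inner : ∀ r ≤ j - i, s (i + r) = s i := by
    simpa using ih (j - i) (by omega) (hs.shift (i := i) (k := j - i) (by omega))
      (by simp [show i + (j - i) = j by omega, heq])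
  have outer := ih (m - (j - i)) (by omega) (hs.splice hij.le hjm.le heq)
    (by simp [show ¬ m - (j - i) ≤ i by omega, show m - (j - i) + (j - i) = m by omega, hclosed])
  simp only [Nat.zero_le, if_true] at outer
  rcases le_or_gt a i with hai | hia
  · simpa [hai] using outer a (by omega)
  rcases le_or_gt a j with haj | hja
  · have := inner (a - i) (by omega)
    rw [show i + (a - i) = a by omega] at this
    rw [this]
    simpa using outer i (by omega)
  · simpa [show ¬ a - (j - i) ≤ i by omega, show a - (j - i) + (j - i) = a by omega]
      using outer (a - (j - i)) (by omega)

lemma WeaklyAcyclic.deltaStar_eq_of_append_eq (hwa : WeaklyAcyclic δ) {q : Q} {u v : List A}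
    (h : deltaStar δ q (u ++ v) = q) : deltaStar δ q u = q := by
  have hwalk : IsWalk δ (fun i => deltaStar δ q ((u ++ v).take i)) (u ++ v).length :=
    fun i hi => ⟨_, (deltaStar_take_add_one δ q _ i hi).symm⟩
  have hclosed :
      deltaStar δ q ((u ++ v).take (u ++ v).length) = deltaStar δ q ((u ++ v).take 0) := by
    rw [List.take_length, h, List.take_zero, deltaStar_nil]
  simpa using hwa.walk_eq_start_of_closed hwalk hclosed u.length (by simp)

abbrev WeaklyAcyclic.reachOrder (hwa : WeaklyAcyclic δ) : PartialOrder Q where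
  le q p := ∃ w, deltaStar δ q w = p
  le_refl q := ⟨[], rfl⟩
  le_trans := by
    rintro q p r ⟨u, rfl⟩ ⟨v, rfl⟩
    exact ⟨u ++ v, deltaStar_append δ q u v⟩
  le_antisymm := by
    rintro q p ⟨u, rfl⟩ ⟨v, hv⟩
    exact (hwa.deltaStar_eq_of_append_eq (by rwa [deltaStar_append])).symm

theorem WeaklyAcyclic.exists_equiv_fin_lt_of_ne [Fintype Q] {n : ℕ} (hwa : WeaklyAcyclic δ)
    (hn : Fintype.card Q = n) :
    ∃ e : Q ≃ Fin n, ∀ q x, δ q x ≠ q → e q < e (δ q x) := by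
  let := hwa.reachOrder
  let : Fintype (LinearExtension Q) := inferInstanceAs (Fintype Q)
  let f := (Fintype.orderIsoFinOfCardEq (LinearExtension Q) hn).symm
  refine ⟨f.toEquiv, fun q x hne => ?_⟩
  have hle : toLinearExtension q ≤ toLinearExtension (δ q x) :=
    toLinearExtension.monotone ⟨[x], rfl⟩
  exact (f.monotone hle).lt_of_ne (f.injective.ne (Ne.symm hne))

theorem exists_image_deltaStar_eq_length_add_sum_le [DecidableEq Q] (h : Q → ℕ)
    (hstrict : ∀ q x, δ q x ≠ q → h q < h (δ q x)) (S : Finset Q) (w : List A) :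
    ∃ w' : List A, S.image (deltaStar δ · w') = S.image (deltaStar δ · w) ∧
      w'.length + ∑ q ∈ S, h q ≤ ∑ q ∈ S, h (deltaStar δ q w) := by
  have hmono (q : Q) (x : A) : h q ≤ h (δ q x) := by
    by_cases hq : δ q x = q
    · rw [hq]
    · exact (hstrict q x hq).le
  induction w using List.reverseRecOn with
  | nil => exact ⟨[], rfl, by simp⟩
  | append_singleton u x ih =>
    obtain ⟨u', himage, hlen⟩ := ih
    have hsnoc (q : Q) (v : List A) : deltaStar δ q (v ++ [x]) = δ (deltaStar δ q v) x := by
      rw [deltaStar_append]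
      rfl
    have himage_snoc (v : List A) :
        S.image (deltaStar δ · (v ++ [x])) = (S.image (deltaStar δ · v)).image (δ · x) := by
      rw [Finset.image_image]
      exact Finset.image_congr fun q _ => hsnoc q v
    by_cases hfix : ∀ q ∈ S, δ (deltaStar δ q u) x = deltaStar δ q u
    · refine ⟨u', ?_, hlen.trans (Finset.sum_le_sum fun q _ => hsnoc q u ▸ hmono _ x)⟩
      rw [himage_snoc, Finset.image_image, himage]
      exact Finset.image_congr fun q hq => (hfix q hq).symm
    · push Not at hfix
      obtain ⟨q₀, hq₀, hmoved⟩ := hfix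
      refine ⟨u' ++ [x], by rw [himage_snoc, himage_snoc, himage], ?_⟩
      have hlt : ∑ q ∈ S, h (deltaStar δ q u) < ∑ q ∈ S, h (deltaStar δ q (u ++ [x])) :=
        Finset.sum_lt_sum (fun q _ => hsnoc q u ▸ hmono _ x)
          ⟨q₀, hq₀, hsnoc q₀ u ▸ hstrict _ x hmoved⟩
      rw [List.length_append, List.length_singleton]
      omega

end

theorem stmt19_general {Q A : Type*} [Fintype Q] [DecidableEq Q] (δ : Q → A → Q)
    (n : ℕ) (hn : Fintype.card Q = n) (hwa : WeaklyAcyclic δ) (S : Finset Q)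
    (h : ∃ w : List A, Finset.univ.image (fun q => deltaStar δ q w) = S) :
    ∃ w' : List A, w'.length ≤ n * (n - 1) / 2 ∧
      Finset.univ.image (fun q => deltaStar δ q w') = S := by
  obtain ⟨w, rfl⟩ := h
  obtain ⟨e, he⟩ := hwa.exists_equiv_fin_lt_of_ne hn
  obtain ⟨w', himage, hlen⟩ :=
    exists_image_deltaStar_eq_length_add_sum_le (fun q => (e q : ℕ)) he Finset.univ w
  refine ⟨w', ?_, himage⟩
  have hsum : (∑ q, (e q : ℕ)) * 2 = n * (n - 1) := by
    rw [e.sum_comp (fun i : Fin n => (i : ℕ)), Fin.sum_univ_eq_sum_range (fun i => i) n,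
      Finset.sum_range_id_mul_two]
  have hbound : ∑ q, (e (deltaStar δ q w) : ℕ) ≤ n * (n - 1) :=
    calc _ ≤ ∑ _q : Q, (n - 1) := Finset.sum_le_sum fun q _ => Nat.le_pred_of_lt (e _).isLt
      _ = n * (n - 1) := by simp [hn]
  omega

/-- In an `n`-state weakly acyclic automaton, every reachable subset of states (an image
of the whole state set under some word) is the image of the state set under a word of
length at most `n(n-1)/2`. -/
theorem stmt19 {Q A : Type*} [Fintype Q] [DecidableEq Q] [Fintype A] (δ : Q → A → Q)
    (n : ℕ) (hn : Fintype.card Q = n) (hwa : WeaklyAcyclic δ) (S : Finset Q)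
    (h : ∃ w : List A, Finset.univ.image (fun q => deltaStar δ q w) = S) :
    ∃ w' : List A, w'.length ≤ n * (n - 1) / 2 ∧
      Finset.univ.image (fun q => deltaStar δ q w') = S :=
  stmt19_general δ n hn hwa S h
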